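/- Let λ ≥ 0, let A be a real m×n matrix and b̃ ∈ ℝᵐ, and define Ψ̃(y) = ½‖S_λ(Aᵀy)‖² − ⟨y, b̃⟩. Then for all y, d ∈ ℝᵐ: Ψ̃(y + d) ≤ Ψ̃(y) + ⟨d, A·S_λ(Aᵀy) − b̃⟩ + (‖A‖₂²/2)·‖d‖². -/

import Mathlib

open scoped RealInnerProductSpace BigOperators
open Matrix

noncomputable def softShrink {n : ℕ} (lam : ℝ) (x : EuclideanSpace ℝ (Fin n)) :
    EuclideanSpace ℝ (Fin n) :=
  WithLp.toLp 2 (fun i => Real.sign (x i) * max (|x i| - lam) 0)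

noncomputable def mulVecE {m n : ℕ} (A : Matrix (Fin m) (Fin n) ℝ)
    (x : EuclideanSpace ℝ (Fin n)) : EuclideanSpace ℝ (Fin m) :=
  Matrix.toEuclideanLin A x

/-- The operator (spectral) norm `‖A‖₂` of the linear map `x ↦ Ax` between
Euclidean spaces. -/
noncomputable def matOpNorm {m n : ℕ} (A : Matrix (Fin m) (Fin n) ℝ) : ℝ :=
  ‖LinearMap.toContinuousLinearMap (Matrix.toEuclideanLin A)‖

lemma soft_eq_clamp (lam : ℝ) (hlam : 0 ≤ lam) (t : ℝ) :
    Real.sign t * max (|t| - lam) 0 = t - max (-lam) (min lam t) := by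
  rcases lt_trichotomy t 0 with h | h | h
  · rw [Real.sign_of_neg h, abs_of_neg h, min_eq_right (by linarith)]
    rcases le_total t (-lam) with h2 | h2
    · rw [max_eq_left (by linarith), max_eq_left h2]; ring
    · rw [max_eq_right (by linarith), max_eq_right h2]; ring
  · simp [h, max_eq_right (by linarith : -lam ≤ (0:ℝ)), min_eq_right hlam,
      max_eq_right (neg_nonpos.mpr hlam)]
  · rw [Real.sign_of_pos h, abs_of_pos h, one_mul]
    rcases le_total t lam with h2 | h2
    · rw [max_eq_right (by linarith), min_eq_right h2, max_eq_right (by linarith)]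
      ring
    · rw [max_eq_left (by linarith), min_eq_left h2, max_eq_right (by linarith)]

lemma clamp_descent (lam : ℝ) (hlam : 0 ≤ lam) (a b : ℝ) :
    let c : ℝ → ℝ := fun t => max (-lam) (min lam t)
    (1/2) * (b - c b)^2 ≤ (1/2) * (a - c a)^2 + (a - c a) * (b - a) + (1/2) * (b - a)^2 := by
  intro c
  have hca_le : c a ≤ lam := by
    simp only [c, max_le_iff]
    exact ⟨by linarith, min_le_left _ _⟩
  have key : (c b - c a) * (2*b - c a - c b) ≥ 0 := by
    rcases lt_trichotomy (c a) (c b) with h | h | h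
    · have hb : c b ≤ b := by
        have h1 : -lam < c b := lt_of_le_of_lt (le_max_left _ _) h
        have h2 : -lam ≤ b := by
          by_contra hc
          push_neg at hc
          have : c b = -lam := by
            simp only [c]
            rw [min_eq_right (by linarith), max_eq_left (by linarith)]
          linarith
        simp only [c, max_le_iff]
        exact ⟨h2, le_trans (min_le_right _ _) le_rfl⟩
      nlinarith
    · simp [h]
    · have hb : b ≤ c b := by
        have h1 : c b < lam := lt_of_lt_of_le h hca_le
        simp only [c] at h1 ⊢
        rcases le_total b lam with h3 | h3
        · rw [min_eq_right h3]; exact le_max_right _ _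
        · rw [min_eq_left h3] at h1
          exact absurd h1 (not_lt.mpr (le_max_right _ _))
      nlinarith
  nlinarith

lemma soft_descent_scalar (lam : ℝ) (hlam : 0 ≤ lam) (a v : ℝ) :
    (1/2) * (Real.sign (a + v) * max (|a + v| - lam) 0)^2 ≤
      (1/2) * (Real.sign a * max (|a| - lam) 0)^2 +
        (Real.sign a * max (|a| - lam) 0) * v + (1/2) * v^2 := by
  rw [soft_eq_clamp lam hlam, soft_eq_clamp lam hlam]
  have := clamp_descent lam hlam a (a + v)
  simp only [add_sub_cancel_left] at this
  exact this

lemma soft_descent_vec {n : ℕ} (lam : ℝ) (hlam : 0 ≤ lam)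
    (u v : EuclideanSpace ℝ (Fin n)) :
    (1/2) * ‖softShrink lam (u + v)‖^2 ≤
      (1/2) * ‖softShrink lam u‖^2 + ⟪softShrink lam u, v⟫ + (1/2) * ‖v‖^2 := by
  have hn : ∀ x : EuclideanSpace ℝ (Fin n), ‖x‖^2 = ∑ i, (x i)^2 := by
    intro x
    rw [EuclideanSpace.norm_eq, Real.sq_sqrt (by positivity)]
    simp [sq_abs]
  rw [hn, hn, hn, PiLp.inner_apply]
  simp only [RCLike.inner_apply, conj_trivial, Finset.mul_sum, ← Finset.sum_add_distrib]
  apply Finset.sum_le_sum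
  intro i _
  have hadd : (u + v) i = u i + v i := rfl
  simp only [softShrink, WithLp.ofLp_toLp, hadd]
  have := soft_descent_scalar lam hlam (u i) (v i)
  nlinarith [this]

/-- Full descent lemma for `Ψ̃(y) = ½‖S_λ(Aᵀy)‖² − ⟨y, b̃⟩`:
`Ψ̃(y + d) ≤ Ψ̃(y) + ⟨d, A·S_λ(Aᵀy) − b̃⟩ + (‖A‖₂²/2)‖d‖²`. -/
theorem descent_lemma_full {m n : ℕ} (lam : ℝ) (hlam : 0 ≤ lam)
    (A : Matrix (Fin m) (Fin n) ℝ) (btil : EuclideanSpace ℝ (Fin m)) :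
    ∀ y d : EuclideanSpace ℝ (Fin m),
      (1 / 2) * ‖softShrink lam (mulVecE Aᵀ (y + d))‖ ^ 2 - ⟪y + d, btil⟫ ≤
        ((1 / 2) * ‖softShrink lam (mulVecE Aᵀ y)‖ ^ 2 - ⟪y, btil⟫) +
          ⟪d, mulVecE A (softShrink lam (mulVecE Aᵀ y)) - btil⟫ +
          (matOpNorm A ^ 2 / 2) * ‖d‖ ^ 2 := by
  intro y d
  have hT : Aᵀ = Aᴴ := by
    ext i j
    simp [Matrix.conjTranspose_apply]
  have hadj : Matrix.toEuclideanLin Aᵀ =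
      LinearMap.adjoint (Matrix.toEuclideanLin A) := by
    rw [hT]
    exact Matrix.toEuclideanLin_conjTranspose_eq_adjoint A
  have hmap : mulVecE Aᵀ (y + d) = mulVecE Aᵀ y + mulVecE Aᵀ d := by
    simp [mulVecE, map_add]
  have h1 := soft_descent_vec lam hlam (mulVecE Aᵀ y) (mulVecE Aᵀ d)
  rw [← hmap] at h1
  have h2 : ⟪softShrink lam (mulVecE Aᵀ y), mulVecE Aᵀ d⟫ =
      ⟪mulVecE A (softShrink lam (mulVecE Aᵀ y)), d⟫ := by
    simp only [mulVecE, hadj]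
    exact LinearMap.adjoint_inner_right _ _ _
  have h3 : ‖mulVecE Aᵀ d‖ ≤ matOpNorm A * ‖d‖ := by
    have : mulVecE Aᵀ d =
        (ContinuousLinearMap.adjoint
          (LinearMap.toContinuousLinearMap (Matrix.toEuclideanLin A))) d := by
      simp only [mulVecE, hadj]
      rfl
    rw [this]
    calc ‖_‖ ≤ ‖ContinuousLinearMap.adjoint
          (LinearMap.toContinuousLinearMap (Matrix.toEuclideanLin A))‖ * ‖d‖ :=
            ContinuousLinearMap.le_opNorm _ _
      _ = matOpNorm A * ‖d‖ := by
          rw [LinearIsometryEquiv.norm_map]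
          rfl
  have h4 : ‖mulVecE Aᵀ d‖^2 ≤ matOpNorm A^2 * ‖d‖^2 := by
    nlinarith [norm_nonneg (mulVecE Aᵀ d), norm_nonneg d,
      mul_nonneg (norm_nonneg (d : EuclideanSpace ℝ (Fin m)))
        (norm_nonneg (d : EuclideanSpace ℝ (Fin m)))]
  have h5 : ⟪y + d, btil⟫ = ⟪y, btil⟫ + ⟪d, btil⟫ := inner_add_left _ _ _
  have h6 : ⟪d, mulVecE A (softShrink lam (mulVecE Aᵀ y)) - btil⟫ =
      ⟪d, mulVecE A (softShrink lam (mulVecE Aᵀ y))⟫ - ⟪d, btil⟫ :=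
    inner_sub_right _ _ _
  have h7 : ⟪mulVecE A (softShrink lam (mulVecE Aᵀ y)), d⟫ =
      ⟪d, mulVecE A (softShrink lam (mulVecE Aᵀ y))⟫ := real_inner_comm _ _
  rw [h2, h7] at h1
  linarith
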